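/- The map ψ(g,f) = (g(z²), f(z²)/z, z) from the Riordan group to the Double Riordan group is a group monomorphism: it is injective and satisfies ψ(g,f)*ψ(G,F) = ψ((g,f)*(G,F)) under Double Riordan multiplication. -/

import Mathlib

open PowerSeries

variable {K : Type*} [Field K]

/-- Composition (substitution) of formal power series: `pcomp A f = A ∘ f`,
intended for `f` with zero constant term, where `coeff n (f ^ k) = 0` for `k > n`. -/
noncomputable def pcomp (A f : PowerSeries K) : PowerSeries K :=
  PowerSeries.mk fun n => ∑ k ∈ Finset.range (n + 1), coeff k A * coeff n (f ^ k)

/-- A formal power series is even if all its odd coefficients vanish. -/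
def IsEvenPS (g : PowerSeries K) : Prop := ∀ n : ℕ, Odd n → coeff n g = 0

/-- A formal power series is odd if all its even coefficients vanish. -/
def IsOddPS (f : PowerSeries K) : Prop := ∀ n : ℕ, Even n → coeff n f = 0

lemma coeff_pcomp (A f : PowerSeries K) (n : ℕ) :
    coeff n (pcomp A f) = ∑ k ∈ Finset.range (n + 1), coeff k A * coeff n (f ^ k) := by
  simp [pcomp]

lemma coeff_pow_zero {f : PowerSeries K} (hf : constantCoeff f = 0)
    {n k : ℕ} (h : n < k) : coeff n (f ^ k) = 0 := by
  have : (X : PowerSeries K) ^ k ∣ f ^ k :=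
    pow_dvd_pow_of_dvd (PowerSeries.X_dvd_iff.mpr hf) k
  exact PowerSeries.X_pow_dvd_iff.mp this n h

lemma coeff_aeval {f : PowerSeries K} (hf : constantCoeff f = 0)
    (P : Polynomial K) (n : ℕ) :
    coeff n (Polynomial.aeval f P) =
      ∑ k ∈ Finset.range (n + 1), P.coeff k * coeff n (f ^ k) := by
  set N := max (n + 1) (P.natDegree + 1) with hN
  have hdeg : P.natDegree < N := lt_of_lt_of_le (Nat.lt_succ_self _) (le_max_right _ _)
  rw [Polynomial.aeval_eq_sum_range' hdeg f, map_sum]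
  have : ∀ i ∈ Finset.range N, coeff n (P.coeff i • f ^ i) = P.coeff i * coeff n (f ^ i) := by
    intro i _
    rw [LinearMap.map_smul, smul_eq_mul]
  rw [Finset.sum_congr rfl this]
  exact (Finset.sum_subset (Finset.range_subset_range.mpr (le_max_left _ _))
    (fun i _ hi => by
      rw [coeff_pow_zero hf (by exact Nat.lt_of_succ_le (Nat.succ_le_of_lt
        (Nat.lt_of_succ_le (le_of_not_gt (fun hc => hi (Finset.mem_range.mpr hc)))))), mul_zero])).symm

lemma coeff_aeval_trunc {f : PowerSeries K} (hf : constantCoeff f = 0)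
    (A : PowerSeries K) {p m : ℕ} (hpm : p < m) :
    coeff p (Polynomial.aeval f (PowerSeries.trunc m A)) = coeff p (pcomp A f) := by
  rw [coeff_aeval hf, coeff_pcomp]
  refine Finset.sum_congr rfl fun k hk => ?_
  rw [PowerSeries.coeff_trunc]
  have : k < m := lt_of_lt_of_le (Finset.mem_range.mp hk) hpm
  rw [if_pos this]

lemma pcomp_C (c : K) (f : PowerSeries K) : pcomp (C c) f = C c := by
  ext n
  rw [coeff_pcomp]
  have h0 : (0 : ℕ) ∈ Finset.range (n + 1) := Finset.mem_range.mpr (Nat.succ_pos n)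
  rw [Finset.sum_eq_single 0 (fun k _ hk => by rw [coeff_C, if_neg hk, zero_mul])
    (fun h => absurd h0 h)]
  simp [coeff_C, coeff_one]

lemma pcomp_one (f : PowerSeries K) : pcomp 1 f = 1 := by
  have := pcomp_C (1 : K) f
  rwa [map_one] at this

lemma pcomp_add (A B f : PowerSeries K) : pcomp (A + B) f = pcomp A f + pcomp B f := by
  ext n
  simp [coeff_pcomp, add_mul, Finset.sum_add_distrib]

lemma pcomp_X {f : PowerSeries K} (hf : constantCoeff f = 0) : pcomp X f = f := by
  ext n
  rw [coeff_pcomp]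
  cases n with
  | zero =>
    simp [hf]
  | succ m =>
    have h1 : (1 : ℕ) ∈ Finset.range (m + 1 + 1) := Finset.mem_range.mpr (Nat.succ_le_succ (Nat.succ_pos m))
    rw [Finset.sum_eq_single 1 (fun k _ hk => by rw [PowerSeries.coeff_X, if_neg hk, zero_mul])
      (fun h => absurd h1 h)]
    simp

lemma coeff_zero_pcomp (f e : PowerSeries K) :
    constantCoeff (pcomp f e) = constantCoeff f := by
  rw [← coeff_zero_eq_constantCoeff_apply, ← coeff_zero_eq_constantCoeff_apply, coeff_pcomp]
  simp

lemma pcomp_mul {f : PowerSeries K} (hf : constantCoeff f = 0) (A B : PowerSeries K) :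
    pcomp (A * B) f = pcomp A f * pcomp B f := by
  ext n
  have key : coeff n (pcomp (A * B) f) =
      coeff n (Polynomial.aeval f (PowerSeries.trunc (n+1) A * PowerSeries.trunc (n+1) B)) := by
    rw [coeff_pcomp, coeff_aeval hf]
    refine Finset.sum_congr rfl fun k hk => ?_
    have hk' : k < n + 1 := Finset.mem_range.mp hk
    rw [PowerSeries.coeff_mul, Polynomial.coeff_mul]
    congr 1
    refine Finset.sum_congr rfl fun p hp => ?_
    have hpq := Finset.HasAntidiagonal.mem_antidiagonal.mp hp
    have h1 : p.1 < n + 1 := lt_of_le_of_lt (le_trans (Nat.le_add_right _ _) (le_of_eq hpq)) hk'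
    have h2 : p.2 < n + 1 := lt_of_le_of_lt (le_trans (Nat.le_add_left _ _) (le_of_eq hpq)) hk'
    rw [PowerSeries.coeff_trunc, PowerSeries.coeff_trunc, if_pos h1, if_pos h2]
  rw [key, map_mul, PowerSeries.coeff_mul, PowerSeries.coeff_mul]
  refine Finset.sum_congr rfl fun p hp => ?_
  have hpq := Finset.HasAntidiagonal.mem_antidiagonal.mp hp
  have h1 : p.1 < n + 1 := Nat.lt_succ_of_le (le_trans (Nat.le_add_right _ _) (le_of_eq hpq))
  have h2 : p.2 < n + 1 := Nat.lt_succ_of_le (le_trans (Nat.le_add_left _ _) (le_of_eq hpq))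
  rw [coeff_aeval_trunc hf A h1, coeff_aeval_trunc hf B h2]

lemma pcomp_pow {f : PowerSeries K} (hf : constantCoeff f = 0) (A : PowerSeries K) (k : ℕ) :
    pcomp (A ^ k) f = (pcomp A f) ^ k := by
  induction k with
  | zero => simpa using pcomp_one f
  | succ m ih => rw [pow_succ, pcomp_mul hf, ih, pow_succ]

lemma pcomp_aeval {f e : PowerSeries K} (hf : constantCoeff f = 0)
    (he : constantCoeff e = 0) (P : Polynomial K) :
    pcomp (Polynomial.aeval f P) e = Polynomial.aeval (pcomp f e) P := by
  induction P using Polynomial.induction_on with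
  | C a => rw [Polynomial.aeval_C, Polynomial.aeval_C]; exact pcomp_C a e
  | add p q hp hq => rw [map_add, map_add, pcomp_add, hp, hq]
  | monomial m a _ =>
    simp only [pow_succ, ← mul_assoc, map_mul, map_pow, Polynomial.aeval_X, Polynomial.aeval_C,
      pcomp_mul he, pcomp_pow he, pcomp_X he, PowerSeries.algebraMap_apply, Algebra.algebraMap_self,
      RingHom.id_apply, pcomp_C]

lemma pcomp_assoc {f e : PowerSeries K} (hf : constantCoeff f = 0)
    (he : constantCoeff e = 0) (A : PowerSeries K) :
    pcomp (pcomp A f) e = pcomp A (pcomp f e) := by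
  have hfe : constantCoeff (pcomp f e) = 0 := by rw [coeff_zero_pcomp, hf]
  ext n
  rw [show coeff n (pcomp A (pcomp f e)) =
      coeff n (Polynomial.aeval (pcomp f e) (PowerSeries.trunc (n+1) A)) from
      (coeff_aeval_trunc hfe A (Nat.lt_succ_self n)).symm,
    ← pcomp_aeval hf he, coeff_pcomp, coeff_pcomp]
  refine Finset.sum_congr rfl fun k hk => ?_
  rw [coeff_aeval_trunc hf A (Finset.mem_range.mp hk)]

lemma coeff_pcomp_X2 (A : PowerSeries K) (n : ℕ) :
    coeff (2 * n) (pcomp A (X ^ 2)) = coeff n A := by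
  rw [coeff_pcomp]
  have hn : n ∈ Finset.range (2 * n + 1) := Finset.mem_range.mpr (Nat.lt_succ_of_le (Nat.le_mul_of_pos_left n (by norm_num)))
  rw [Finset.sum_eq_single n (fun k _ hk => by
      rw [← pow_mul, PowerSeries.coeff_X_pow, if_neg (fun hc => hk (by omega)), mul_zero])
    (fun h => absurd hn h)]
  rw [← pow_mul, PowerSeries.coeff_X_pow, if_pos rfl, mul_one]

/-- The map ψ(g,f) = (g(z²), f(z²)/z, z) is a group monomorphism: it satisfies
ψ(g,f)*ψ(G,F) = ψ((g,f)*(G,F)) componentwise under Double Riordan multiplication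
(with h the odd square root of f₁f₂ = f(z²), b = fc/h, a = z/h), and it is
injective. -/
theorem stmt10 (g f G F fc Fc h a b : PowerSeries K)
    (hg : constantCoeff g ≠ 0)
    (hf0 : constantCoeff f = 0) (hf1 : coeff 1 f ≠ 0)
    (hG : constantCoeff G ≠ 0)
    (hF0 : constantCoeff F = 0) (hF1 : coeff 1 F ≠ 0)
    (hfc : X * fc = pcomp f (X ^ 2)) (hFc : X * Fc = pcomp F (X ^ 2))
    (hh : IsOddPS h) (hsq : h ^ 2 = fc * X)
    (ha : a * h = X) (hb : b * h = fc) :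
    (pcomp g (X ^ 2) * pcomp (pcomp G (X ^ 2)) h = pcomp (g * pcomp G f) (X ^ 2) ∧
      X * (b * pcomp Fc h) = pcomp (pcomp F f) (X ^ 2) ∧
      a * pcomp X h = X) ∧
    ((pcomp g (X ^ 2) = pcomp G (X ^ 2) ∧ fc = Fc) → g = G ∧ f = F) := by
  have hs : constantCoeff ((X : PowerSeries K) ^ 2) = 0 := by simp
  have hh0 : constantCoeff h = 0 := by
    rw [← coeff_zero_eq_constantCoeff_apply]; exact hh 0 Even.zero
  -- coeff 1 fc = coeff 1 f
  have hfc1 : coeff 1 fc = coeff 1 f := by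
    have h2 : coeff 2 (X * fc) = coeff 2 (pcomp f (X ^ 2)) := by rw [hfc]
    rw [PowerSeries.coeff_succ_X_mul] at h2
    rw [h2, show (2 : ℕ) = 2 * 1 from rfl, coeff_pcomp_X2]
  have hfc_ne : fc ≠ 0 := fun h0 => hf1 (by rw [← hfc1, h0, map_zero])
  have hhne : h ≠ 0 := by
    intro h0
    apply hfc_ne
    have : fc * X = 0 := by rw [← hsq, h0]; ring
    rcases mul_eq_zero.mp this with h1 | h1
    · exact h1
    · exact absurd h1 PowerSeries.X_ne_zero
  have hbX : b * X = h := by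
    apply mul_right_cancel₀ hhne
    calc b * X * h = b * h * X := by ring
      _ = fc * X := by rw [hb]
      _ = h ^ 2 := hsq.symm
      _ = h * h := sq h
  have hX2h : pcomp ((X : PowerSeries K) ^ 2) h = X * fc := by
    rw [pcomp_pow hh0, pcomp_X hh0, hsq, mul_comm]
  refine ⟨⟨?_, ?_, ?_⟩, ?_⟩
  · -- first component
    rw [pcomp_mul hs, pcomp_assoc hs hh0, pcomp_assoc hf0 hs, hX2h, hfc]
  · -- second component
    rw [pcomp_assoc hf0 hs, ← hfc, ← hX2h, ← pcomp_assoc hs hh0, ← hFc,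
      pcomp_mul hh0, pcomp_X hh0,
      show X * (b * pcomp Fc h) = (b * X) * pcomp Fc h by ring, hbX]
  · rw [pcomp_X hh0, ha]
  · rintro ⟨h1, h2⟩
    constructor
    · ext n
      rw [← coeff_pcomp_X2 g n, h1, coeff_pcomp_X2]
    · ext n
      have h3 : pcomp f (X ^ 2) = pcomp F (X ^ 2) := by rw [← hfc, ← hFc, h2]
      rw [← coeff_pcomp_X2 f n, h3, coeff_pcomp_X2]
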